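/- Let d′ ≥ 1 be an integer, σ ∈ (0, d′) a real number, and n ≥ 1 an integer with n·σ > (n−1)·d′. Let f(x) := (1 + |x|²)^{−σ/2} on ℝ^{d′} and let f^{∗n} denote its n-fold convolution power (f^{∗1} := f). Then there exist constants 0 < c ≤ C < ∞ such that for all x ∈ ℝ^{d′}: c·(1 + |x|²)^{((n−1)d′ − nσ)/2} ≤ f^{∗n}(x) ≤ C·(1 + |x|²)^{((n−1)d′ − nσ)/2}. -/

import Mathlib

open scoped ENNReal
open MeasureTheory
noncomputable section

/-- n-fold convolution power (in [0,∞]) of f(x) = (1+|x|²)^{−σ/2} on ℝ^{d'}. -/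
def convPowF (d' : ℕ) (σ : ℝ) : ℕ → EuclideanSpace ℝ (Fin d') → ℝ≥0∞
  | 0 => fun _ => 0
  | 1 => fun x => ENNReal.ofReal ((1 + ‖x‖^2) ^ (-σ/2))
  | n+2 => fun x =>
      ∫⁻ y, convPowF d' σ (n+1) (x - y) * ENNReal.ofReal ((1 + ‖y‖^2) ^ (-σ/2))

section Stmt18AuxSection
open Metric Set
namespace Stmt18Aux
variable {d' : ℕ}
local notation "E" => EuclideanSpace ℝ (Fin d')
def W (d' : ℕ) (ρ : ℝ) (y : EuclideanSpace ℝ (Fin d')) : ℝ≥0∞ :=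
  ENNReal.ofReal ((1 + ‖y‖) ^ (-ρ))
lemma W_meas (ρ : ℝ) : Measurable (W d' ρ) := by
  exact (ENNReal.continuous_ofReal.comp (Continuous.rpow_const (by continuity)
    (fun x => Or.inl (by positivity)))).measurable
lemma finrank_E : Module.finrank ℝ (EuclideanSpace ℝ (Fin d')) = d' := by
  simp [finrank_euclideanSpace]
lemma vol_cb (t : ℝ) (ht : 0 ≤ t) :
    volume (closedBall (0 : E) t)
      = ENNReal.ofReal (t ^ (d' : ℕ)) * volume (ball (0 : E) 1) := by
  rw [Measure.addHaar_closedBall _ _ ht, finrank_E]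
lemma ann_bound (ρ : ℝ) (hρ : 0 ≤ ρ) {s : Set E} {a b : ℝ} (ha : 0 ≤ a) (hb : 0 ≤ b)
    (hs : s ⊆ closedBall (0 : E) b) (hs' : ∀ y ∈ s, a ≤ ‖y‖) :
    ∫⁻ y in s, W d' ρ y
      ≤ ENNReal.ofReal ((1 + a) ^ (-ρ) * b ^ (d' : ℕ)) * volume (ball (0 : E) 1) := by
  calc ∫⁻ y in s, W d' ρ y ≤ ∫⁻ _ in s, ENNReal.ofReal ((1 + a) ^ (-ρ)) := by
        apply setLIntegral_mono measurable_const
        intro y hy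
        apply ENNReal.ofReal_le_ofReal
        exact Real.rpow_le_rpow_of_nonpos (by positivity)
          (by linarith [hs' y hy]) (by linarith)
    _ = ENNReal.ofReal ((1 + a) ^ (-ρ)) * volume s := setLIntegral_const _ _
    _ ≤ ENNReal.ofReal ((1 + a) ^ (-ρ)) * (ENNReal.ofReal (b ^ (d' : ℕ)) * volume (ball (0 : E) 1)) := by
        gcongr
        rw [← vol_cb b hb]; exact measure_mono hs
    _ = _ := by rw [← mul_assoc, ← ENNReal.ofReal_mul (by positivity)]

lemma half_bracket {σ t : ℝ} (hσ0 : 0 ≤ σ) (ht : 0 < t) :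
    (1 + t / 2) ^ (-σ) * t ^ (d' : ℕ) ≤ 2 ^ σ * t ^ ((d' : ℝ) - σ) := by
  have h1 : (1 + t / 2) ^ (-σ) ≤ (t / 2) ^ (-σ) :=
    Real.rpow_le_rpow_of_nonpos (by positivity) (by linarith) (by linarith)
  have h2 : (t / 2 : ℝ) ^ (-σ) * t ^ (d' : ℕ) = 2 ^ σ * t ^ ((d' : ℝ) - σ) := by
    rw [Real.div_rpow ht.le (by norm_num), ← Real.rpow_natCast t d',
      show ((d' : ℝ) - σ) = -σ + (d' : ℝ) by ring, Real.rpow_add ht,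
      Real.rpow_neg (by norm_num : (0:ℝ) ≤ 2)]
    field_simp
  calc (1 + t / 2) ^ (-σ) * t ^ (d' : ℕ)
      ≤ (t / 2) ^ (-σ) * t ^ (d' : ℕ) := mul_le_mul_of_nonneg_right h1 (by positivity)
    _ = _ := h2

lemma U1 (σ : ℝ) (hσ0 : 0 ≤ σ) (hσ : σ < d') :
    ∃ K : ℝ≥0∞, K ≠ ⊤ ∧ ∀ r : ℝ, 0 ≤ r →
      ∫⁻ y in closedBall (0 : E) r, W d' σ y
        ≤ K * ENNReal.ofReal ((1 + r) ^ ((d' : ℝ) - σ)) := by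
  have hd' : 1 ≤ d' := by
    rcases Nat.eq_zero_or_pos d' with h | h
    · exfalso; rw [h] at hσ; push_cast at hσ; linarith
    · exact h
  haveI : Nonempty (Fin d') := Fin.pos_iff_nonempty.mp hd'
  haveI : Nontrivial E := by
    refine ⟨0, EuclideanSpace.single (Classical.arbitrary _) 1, fun h => ?_⟩
    have := congrArg (fun v : E => v (Classical.arbitrary _)) h.symm
    simp [EuclideanSpace.single] at this
  have hDσ : 0 < (d' : ℝ) - σ := by linarith
  set θ : ℝ := (2 : ℝ)⁻¹ ^ ((d' : ℝ) - σ) with hθdef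
  have hθ0 : 0 ≤ θ := by positivity
  have hθ1 : θ < 1 := Real.rpow_lt_one (by norm_num) (by norm_num) hDσ
  have hθ1' : ENNReal.ofReal θ < 1 := ENNReal.ofReal_lt_one.mpr hθ1
  set K : ℝ≥0∞ := ENNReal.ofReal (2 ^ σ) * (1 - ENNReal.ofReal θ)⁻¹
      * volume (ball (0 : E) 1) with hK
  refine ⟨K, ?_, ?_⟩
  · refine ENNReal.mul_ne_top (ENNReal.mul_ne_top ENNReal.ofReal_ne_top ?_)
      measure_ball_lt_top.ne
    rw [ENNReal.inv_ne_top]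
    simp [tsub_eq_zero_iff_le, not_le, hθ1', hθ1]
  intro r hr
  rcases eq_or_lt_of_le hr with h0 | hr
  · rw [← h0, closedBall_zero,
      setLIntegral_measure_zero _ _ (measure_singleton (0 : E))]
    exact bot_le
  set c : ℕ → ℝ := fun k => r * (2 : ℝ)⁻¹ ^ k with hc
  have hcpos : ∀ k, 0 < c k := fun k => by positivity
  have hchalf : ∀ k, c (k + 1) = c k / 2 := fun k => by
    simp only [hc, pow_succ]; ring
  set Ann : ℕ → Set E := fun k => closedBall (0 : E) (c k) \ ball (0 : E) (c (k + 1))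
    with hAnn
  have hcover : closedBall (0 : E) r \ {(0 : E)} ⊆ ⋃ k, Ann k := by
    intro y hy
    obtain ⟨hy1, hy2⟩ := hy
    have hy0 : 0 < ‖y‖ := norm_pos_iff.mpr (by simpa using hy2)
    have hex : ∃ m, c m < ‖y‖ := by
      obtain ⟨m, hm⟩ := exists_pow_lt_of_lt_one (show (0:ℝ) < ‖y‖ / r by positivity)
        (show (2:ℝ)⁻¹ < 1 by norm_num)
      exact ⟨m, by rw [hc]; calc r * (2:ℝ)⁻¹ ^ m < r * (‖y‖ / r) := by gcongr
                   _ = ‖y‖ := by field_simp⟩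
    set k := Nat.find hex with hkdef
    have hk1 : c k < ‖y‖ := Nat.find_spec hex
    have hkpos : 0 < k := by
      rcases Nat.eq_zero_or_pos k with h | h
      · exfalso
        have : c 0 < ‖y‖ := by rw [← h]; exact hk1
        have : ‖y‖ ≤ r := by simpa using mem_closedBall_iff_norm.mp hy1
        simp only [hc, pow_zero, mul_one] at *
        linarith
      · exact h
    obtain ⟨j, hj⟩ := Nat.exists_eq_add_of_lt hkpos
    have hjk : j + 1 = k := by omega
    have hminj : ¬ c j < ‖y‖ := Nat.find_min hex (by omega)
    refine mem_iUnion.mpr ⟨j, ?_, ?_⟩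
    · exact mem_closedBall_iff_norm.mpr (by simpa using not_lt.mp hminj)
    · rw [mem_ball_iff_norm]
      push_neg
      simp only [sub_zero]  -- ?
      rw [hjk]
      exact hk1.le
  calc ∫⁻ y in closedBall (0 : E) r, W d' σ y
      = ∫⁻ y in closedBall (0 : E) r \ {(0 : E)}, W d' σ y := by
        refine (setLIntegral_congr ?_).symm
        refine diff_ae_eq_self.mpr ?_
        exact measure_mono_null inter_subset_right (measure_singleton _)
    _ ≤ ∫⁻ y in ⋃ k, Ann k, W d' σ y := lintegral_mono_set hcover
    _ ≤ ∑' k, ∫⁻ y in Ann k, W d' σ y := lintegral_iUnion_le _ _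
    _ ≤ ∑' k, ENNReal.ofReal ((1 + c (k+1)) ^ (-σ) * (c k) ^ (d' : ℕ))
          * volume (ball (0 : E) 1) := by
        refine ENNReal.tsum_le_tsum fun k => ?_
        refine ann_bound σ hσ0 (hcpos (k+1)).le (hcpos k).le diff_subset fun y hy => ?_
        have := hy.2
        rw [mem_ball_iff_norm] at this
        push_neg at this
        simpa using this
    _ ≤ ∑' k, ENNReal.ofReal ((2 ^ σ * r ^ ((d' : ℝ) - σ)) * θ ^ k)
          * volume (ball (0 : E) 1) := by
        refine ENNReal.tsum_le_tsum fun k => ?_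
        refine mul_le_mul_left (ENNReal.ofReal_le_ofReal ?_) _
        have := half_bracket (d' := d') hσ0 (hcpos k)
        rw [hchalf k]
        calc (1 + c k / 2) ^ (-σ) * (c k) ^ (d' : ℕ)
            ≤ 2 ^ σ * (c k) ^ ((d' : ℝ) - σ) := this
          _ = 2 ^ σ * r ^ ((d' : ℝ) - σ) * θ ^ k := by
              rw [hc, mul_assoc]
              congr 1
              rw [Real.mul_rpow hr.le (by positivity), hθdef,
                ← Real.rpow_natCast ((2:ℝ)⁻¹) k, ← Real.rpow_mul (by norm_num),
                ← Real.rpow_natCast ((2:ℝ)⁻¹ ^ ((d':ℝ) - σ)) k,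
                ← Real.rpow_mul (by norm_num), mul_comm ((d':ℝ) - σ) ((k:ℝ))]
    _ = ENNReal.ofReal (2 ^ σ * r ^ ((d' : ℝ) - σ)) * (1 - ENNReal.ofReal θ)⁻¹
          * volume (ball (0 : E) 1) := by
        rw [ENNReal.tsum_mul_right]
        congr 1
        rw [← ENNReal.tsum_geometric (ENNReal.ofReal θ), ← ENNReal.tsum_mul_left]
        congr 1; funext k
        rw [ENNReal.ofReal_mul (by positivity), ENNReal.ofReal_pow hθ0]
    _ ≤ K * ENNReal.ofReal ((1 + r) ^ ((d' : ℝ) - σ)) := by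
        rw [hK, ENNReal.ofReal_mul (by positivity)]
        calc ENNReal.ofReal (2 ^ σ) * ENNReal.ofReal (r ^ ((d' : ℝ) - σ))
              * (1 - ENNReal.ofReal θ)⁻¹ * volume (ball (0 : E) 1)
            ≤ ENNReal.ofReal (2 ^ σ) * ENNReal.ofReal ((1 + r) ^ ((d' : ℝ) - σ))
              * (1 - ENNReal.ofReal θ)⁻¹ * volume (ball (0 : E) 1) := by
              gcongr
              linarith
          _ = _ := by ring

lemma U2 (ρ : ℝ) (hρ : (d' : ℝ) < ρ) :
    ∃ K : ℝ≥0∞, K ≠ ⊤ ∧ ∀ r : ℝ, 0 ≤ r →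
      ∫⁻ y in {y : E | r ≤ ‖y‖}, W d' ρ y
        ≤ K * ENNReal.ofReal ((1 + r) ^ ((d' : ℝ) - ρ)) := by
  have hρ0 : 0 ≤ ρ := le_trans (Nat.cast_nonneg _) hρ.le
  have he : 0 < ρ - (d' : ℝ) := by linarith
  set T : ℝ≥0∞ := ∫⁻ y : E, W d' ρ y with hT
  have hTfin : T ≠ ⊤ := by
    rw [hT]
    have := finite_integral_one_add_norm (μ := (volume : Measure E)) (r := ρ)
      (by rw [finrank_E]; exact hρ)
    exact this.ne
  set θ : ℝ := (2 : ℝ)⁻¹ ^ (ρ - (d' : ℝ)) with hθdef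
  have hθ0 : 0 ≤ θ := by positivity
  have hθ1 : θ < 1 := Real.rpow_lt_one (by norm_num) (by norm_num) he
  have hθ1' : ENNReal.ofReal θ < 1 := ENNReal.ofReal_lt_one.mpr hθ1
  set K1 : ℝ≥0∞ := T * ENNReal.ofReal (2 ^ (ρ - (d' : ℝ))) with hK1
  set K2 : ℝ≥0∞ := ENNReal.ofReal (2 ^ (d' : ℕ) * 2 ^ (ρ - (d' : ℝ)))
      * (1 - ENNReal.ofReal θ)⁻¹ * volume (ball (0 : E) 1) with hK2
  refine ⟨K1 + K2, ?_, ?_⟩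
  · refine ENNReal.add_ne_top.mpr ⟨ENNReal.mul_ne_top hTfin ENNReal.ofReal_ne_top, ?_⟩
    refine ENNReal.mul_ne_top (ENNReal.mul_ne_top ENNReal.ofReal_ne_top ?_)
      measure_ball_lt_top.ne
    rw [ENNReal.inv_ne_top]
    simp [tsub_eq_zero_iff_le, not_le, hθ1', hθ1]
  intro r hr
  rcases lt_or_ge r 1 with hr1 | hr1
  · -- small r : use whole space integral
    have h1 : (1:ℝ) ≤ 2 ^ (ρ - (d' : ℝ)) * (1 + r) ^ ((d' : ℝ) - ρ) := by
      have h2 : (1 + r) ^ (ρ - (d' : ℝ)) ≤ 2 ^ (ρ - (d' : ℝ)) :=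
        Real.rpow_le_rpow (by linarith) (by linarith) he.le
      have h3 : (0:ℝ) < (1 + r) ^ (ρ - (d' : ℝ)) := by positivity
      have h4 : (1 + r) ^ ((d' : ℝ) - ρ) = ((1 + r) ^ (ρ - (d' : ℝ)))⁻¹ := by
        rw [show (d' : ℝ) - ρ = -(ρ - (d' : ℝ)) by ring, Real.rpow_neg (by linarith)]
      rw [h4, ← div_eq_mul_inv, le_div_iff₀ h3, one_mul]
      exact h2
    calc ∫⁻ y in {y : E | r ≤ ‖y‖}, W d' ρ y ≤ T := by
          rw [hT]; exact setLIntegral_le_lintegral _ _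
      _ = T * 1 := (mul_one T).symm
      _ ≤ K1 * ENNReal.ofReal ((1 + r) ^ ((d' : ℝ) - ρ)) := by
          rw [hK1, mul_assoc, ← ENNReal.ofReal_mul (by positivity)]
          gcongr
          exact ENNReal.one_le_ofReal.mpr h1
      _ ≤ (K1 + K2) * ENNReal.ofReal ((1 + r) ^ ((d' : ℝ) - ρ)) := by
          gcongr; exact le_self_add
  · -- large r : dyadic annuli
    have hr0 : 0 < r := lt_of_lt_of_le one_pos hr1
    set c : ℕ → ℝ := fun k => r * 2 ^ k with hc
    have hcpos : ∀ k, 0 < c k := fun k => by positivity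
    set Ann : ℕ → Set E := fun k => closedBall (0 : E) (c (k + 1)) \ ball (0 : E) (c k)
      with hAnn
    have hcover : {y : E | r ≤ ‖y‖} ⊆ ⋃ k, Ann k := by
      intro y hy
      simp only [mem_setOf_eq] at hy
      have hex : ∃ m, ‖y‖ < c m := by
        obtain ⟨m, hm⟩ := pow_unbounded_of_one_lt (‖y‖ / r) (show (1:ℝ) < 2 by norm_num)
        exact ⟨m, by rw [hc]; calc ‖y‖ = r * (‖y‖ / r) := by field_simp
                     _ < r * 2 ^ m := by gcongr⟩
      set m := Nat.find hex with hmdef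
      have hm1 : ‖y‖ < c m := Nat.find_spec hex
      have hmpos : 0 < m := by
        rcases Nat.eq_zero_or_pos m with h | h
        · exfalso
          have : ‖y‖ < c 0 := by rw [← h]; exact hm1
          simp only [hc, pow_zero, mul_one] at this
          linarith
        · exact h
      obtain ⟨k, hk⟩ := Nat.exists_eq_add_of_lt hmpos
      have hkm : k + 1 = m := by omega
      have hmin : ¬ ‖y‖ < c k := Nat.find_min hex (by omega)
      refine mem_iUnion.mpr ⟨k, ?_, ?_⟩
      · exact mem_closedBall_iff_norm.mpr (by rw [hkm]; simpa using hm1.le)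
      · rw [mem_ball_iff_norm]
        push_neg
        simpa using not_lt.mp hmin
    calc ∫⁻ y in {y : E | r ≤ ‖y‖}, W d' ρ y
        ≤ ∫⁻ y in ⋃ k, Ann k, W d' ρ y := lintegral_mono_set hcover
      _ ≤ ∑' k, ∫⁻ y in Ann k, W d' ρ y := lintegral_iUnion_le _ _
      _ ≤ ∑' k, ENNReal.ofReal ((1 + c k) ^ (-ρ) * (c (k + 1)) ^ (d' : ℕ))
            * volume (ball (0 : E) 1) := by
          refine ENNReal.tsum_le_tsum fun k => ?_
          refine ann_bound ρ hρ0 (hcpos k).le (hcpos (k+1)).le diff_subset fun y hy => ?_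
          have := hy.2
          rw [mem_ball_iff_norm] at this
          push_neg at this
          simpa using this
      _ ≤ ∑' k, ENNReal.ofReal ((2 ^ (d' : ℕ) * r ^ ((d' : ℝ) - ρ)) * θ ^ k)
            * volume (ball (0 : E) 1) := by
          refine ENNReal.tsum_le_tsum fun k => ?_
          refine mul_le_mul_left (ENNReal.ofReal_le_ofReal ?_) _
          have h5 : (1 + c k) ^ (-ρ) ≤ (c k) ^ (-ρ) :=
            Real.rpow_le_rpow_of_nonpos (hcpos k) (by linarith) (by linarith)
          have h6 : (c k : ℝ) ^ (-ρ) * (c (k + 1)) ^ (d' : ℕ)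
              = (2 ^ (d' : ℕ) * r ^ ((d' : ℝ) - ρ)) * θ ^ k := by
            have hck : c (k + 1) = 2 * c k := by simp only [hc, pow_succ]; ring
            rw [hck, mul_pow, ← Real.rpow_natCast (c k) d',
              show (c k) ^ (-ρ) * ((2:ℝ) ^ (d':ℕ) * (c k) ^ (((d':ℕ)):ℝ))
                = (2:ℝ) ^ (d':ℕ) * ((c k) ^ (-ρ) * (c k) ^ (((d':ℕ)):ℝ)) from by ring,
              ← Real.rpow_add (hcpos k)]
            have h7 : (c k : ℝ) ^ (-ρ + (d' : ℝ)) = r ^ ((d' : ℝ) - ρ) * θ ^ k := by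
              rw [hc]
              simp only
              rw [Real.mul_rpow hr0.le (by positivity),
                ← Real.rpow_natCast (2:ℝ) k, ← Real.rpow_mul (by norm_num), hθdef,
                ← Real.rpow_natCast ((2:ℝ)⁻¹ ^ (ρ - (d':ℝ))) k,
                ← Real.rpow_mul (by norm_num),
                show ((-ρ + (d':ℝ))) = ((d':ℝ) - ρ) by ring,
                Real.inv_rpow (by norm_num)]
              rw [← Real.rpow_neg (by norm_num : (0:ℝ) ≤ 2),
                show (-((ρ - (d':ℝ)) * (k:ℝ))) = (k:ℝ) * ((d':ℝ) - ρ) by ring]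
            rw [h7]; ring
          calc (1 + c k) ^ (-ρ) * (c (k + 1)) ^ (d' : ℕ)
              ≤ (c k) ^ (-ρ) * (c (k + 1)) ^ (d' : ℕ) :=
                mul_le_mul_of_nonneg_right h5 (by positivity)
            _ = _ := h6
      _ = ENNReal.ofReal (2 ^ (d' : ℕ) * r ^ ((d' : ℝ) - ρ)) * (1 - ENNReal.ofReal θ)⁻¹
            * volume (ball (0 : E) 1) := by
          rw [ENNReal.tsum_mul_right]
          congr 1
          rw [← ENNReal.tsum_geometric (ENNReal.ofReal θ), ← ENNReal.tsum_mul_left]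
          congr 1; funext k
          rw [ENNReal.ofReal_mul (by positivity), ENNReal.ofReal_pow hθ0]
      _ ≤ (K1 + K2) * ENNReal.ofReal ((1 + r) ^ ((d' : ℝ) - ρ)) := by
          have h8 : r ^ ((d' : ℝ) - ρ) ≤ 2 ^ (ρ - (d' : ℝ)) * (1 + r) ^ ((d' : ℝ) - ρ) := by
            have h9 : ((1 + r) / 2 : ℝ) ^ ((d' : ℝ) - ρ)
                = (1 + r) ^ ((d' : ℝ) - ρ) * 2 ^ (ρ - (d' : ℝ)) := by
              rw [Real.div_rpow (by linarith) (by norm_num),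
                show (d' : ℝ) - ρ = -(ρ - (d' : ℝ)) by ring,
                Real.rpow_neg (show (0:ℝ) ≤ 2 by norm_num), div_eq_mul_inv, inv_inv]
            calc r ^ ((d' : ℝ) - ρ) ≤ ((1 + r) / 2) ^ ((d' : ℝ) - ρ) :=
                  Real.rpow_le_rpow_of_nonpos (by linarith) (by linarith)
                    (by linarith)
              _ = _ := by rw [h9]; ring
          calc ENNReal.ofReal (2 ^ (d' : ℕ) * r ^ ((d' : ℝ) - ρ))
                * (1 - ENNReal.ofReal θ)⁻¹ * volume (ball (0 : E) 1)
              ≤ ENNReal.ofReal (2 ^ (d' : ℕ) * (2 ^ (ρ - (d' : ℝ)) * (1 + r) ^ ((d' : ℝ) - ρ)))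
                * (1 - ENNReal.ofReal θ)⁻¹ * volume (ball (0 : E) 1) := by
                gcongr <;> nlinarith [h8, pow_pos (show (0:ℝ)<2 by norm_num) d']
            _ = K2 * ENNReal.ofReal ((1 + r) ^ ((d' : ℝ) - ρ)) := by
                rw [hK2, show (2:ℝ) ^ (d' : ℕ) * (2 ^ (ρ - (d' : ℝ)) * (1 + r) ^ ((d' : ℝ) - ρ))
                  = (2 ^ (d' : ℕ) * 2 ^ (ρ - (d' : ℝ))) * (1 + r) ^ ((d' : ℝ) - ρ) by ring,
                  ENNReal.ofReal_mul (by positivity)]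
                ring
            _ ≤ (K1 + K2) * ENNReal.ofReal ((1 + r) ^ ((d' : ℝ) - ρ)) := by
                gcongr; exact le_add_self

/-- change of variables y ↦ x - y in a set lintegral -/
lemma lint_sub_left (f : (EuclideanSpace ℝ (Fin d')) → ℝ≥0∞) (x : E) (s : Set E) :
    ∫⁻ y in (fun y => x - y) ⁻¹' s, f (x - y) = ∫⁻ z in s, f z :=
  (Measure.measurePreserving_sub_left volume x).setLIntegral_comp_preimage_emb
    (MeasurableEquiv.subLeft x).measurableEmbedding f s

/-- W is antitone in the norm for nonneg exponent -/
lemma W_le_of_norm_ge {ρ a : ℝ} (hρ : 0 ≤ ρ) (ha : 0 ≤ a) {y : E} (h : a ≤ ‖y‖) :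
    W d' ρ y ≤ ENNReal.ofReal ((1 + a) ^ (-ρ)) :=
  ENNReal.ofReal_le_ofReal <|
    Real.rpow_le_rpow_of_nonpos (by positivity) (by linarith) (by linarith)

/-- lower bound lemma -/
lemma CL (σ τ : ℝ) (hσ0 : 0 ≤ σ) (hτ0 : 0 ≤ τ) :
    ∃ c : ℝ, 0 < c ∧ ∀ x : E,
      ENNReal.ofReal (c * (1 + ‖x‖) ^ ((d' : ℝ) - σ - τ))
        ≤ ∫⁻ y, W d' τ (x - y) * W d' σ y := by
  set v₀ : ℝ := (volume (ball (0 : E) 1)).toReal with hv₀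
  have hv₀pos : 0 < v₀ :=
    ENNReal.toReal_pos (measure_ball_pos _ _ one_pos).ne' measure_ball_lt_top.ne
  refine ⟨3 ^ (-(σ + τ)) * 2 ^ (d' : ℕ) * v₀, by positivity, fun x => ?_⟩
  set s : ℝ := 1 + ‖x‖ with hs
  have hs1 : 1 ≤ s := by rw [hs]; simp [norm_nonneg]
  have hs0 : 0 < s := by linarith
  have hpt : ∀ y ∈ closedBall (0 : E) (2 * s),
      ENNReal.ofReal ((3 * s) ^ (-τ) * (3 * s) ^ (-σ)) ≤ W d' τ (x - y) * W d' σ y := by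
    intro y hy
    rw [mem_closedBall_iff_norm, sub_zero] at hy
    rw [ENNReal.ofReal_mul (by positivity)]
    have h1 : W d' τ (x - y) ≥ ENNReal.ofReal ((3 * s) ^ (-τ)) := by
      apply ENNReal.ofReal_le_ofReal
      apply Real.rpow_le_rpow_of_nonpos (by positivity) ?_ (by linarith)
      have : ‖x - y‖ ≤ ‖x‖ + ‖y‖ := norm_sub_le _ _
      have hxs : ‖x‖ = s - 1 := by rw [hs]; ring
      linarith
    have h2 : W d' σ y ≥ ENNReal.ofReal ((3 * s) ^ (-σ)) := by
      apply ENNReal.ofReal_le_ofReal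
      apply Real.rpow_le_rpow_of_nonpos (by positivity) (by linarith) (by linarith)
    exact mul_le_mul' h1 h2
  calc ENNReal.ofReal ((3:ℝ) ^ (-(σ + τ)) * 2 ^ (d' : ℕ) * v₀ * (1 + ‖x‖) ^ ((d' : ℝ) - σ - τ))
      = ENNReal.ofReal ((3 * s) ^ (-τ) * (3 * s) ^ (-σ) * ((2 * s) ^ (d' : ℕ) * v₀)) := by
        congr 1
        rw [show ((3:ℝ) * s) ^ (-τ) * (3 * s) ^ (-σ) = (3 * s) ^ (-(σ+τ)) from by
            rw [← Real.rpow_add (by positivity)]; ring_nf,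
          Real.mul_rpow (by norm_num) hs0.le, mul_pow, ← Real.rpow_natCast s d',
          show ((d':ℝ) - σ - τ) = -(σ+τ) + ((d':ℕ):ℝ) from by push_cast; ring,
          Real.rpow_add hs0]
        ring
    _ = ENNReal.ofReal ((3 * s) ^ (-τ) * (3 * s) ^ (-σ))
          * (ENNReal.ofReal ((2 * s) ^ (d' : ℕ)) * ENNReal.ofReal v₀) := by
        rw [← ENNReal.ofReal_mul (by positivity), ← ENNReal.ofReal_mul (by positivity)]
    _ ≤ ENNReal.ofReal ((3 * s) ^ (-τ) * (3 * s) ^ (-σ)) * volume (closedBall (0 : E) (2 * s)) := by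
        gcongr
        rw [vol_cb _ (by positivity)]
        gcongr
        rw [hv₀]
        exact (ENNReal.ofReal_toReal measure_ball_lt_top.ne).le
    _ = ∫⁻ _ in closedBall (0 : E) (2 * s), ENNReal.ofReal ((3 * s) ^ (-τ) * (3 * s) ^ (-σ)) :=
        (setLIntegral_const _ _).symm
    _ ≤ ∫⁻ y in closedBall (0 : E) (2 * s), W d' τ (x - y) * W d' σ y :=
        setLIntegral_mono' measurableSet_closedBall hpt
    _ ≤ ∫⁻ y, W d' τ (x - y) * W d' σ y := setLIntegral_le_lintegral _ _

/-- core upper bound for the convolution of two brackets -/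
lemma CU (σ τ : ℝ) (hσ0 : 0 < σ) (hσ : σ < d') (hτ0 : 0 < τ) (hτ : τ < d')
    (hστ : (d' : ℝ) < σ + τ) :
    ∃ K : ℝ≥0∞, K ≠ ⊤ ∧ ∀ x : E,
      ∫⁻ y, W d' τ (x - y) * W d' σ y
        ≤ K * ENNReal.ofReal ((1 + ‖x‖) ^ ((d' : ℝ) - σ - τ)) := by
  obtain ⟨K1, hK1fin, hK1⟩ := U1 σ hσ0.le hσ
  obtain ⟨K1', hK1'fin, hK1'⟩ := U1 τ hτ0.le hτ
  obtain ⟨K2, hK2fin, hK2⟩ := U2 (σ + τ) hστ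
  refine ⟨K1 * ENNReal.ofReal (2 ^ τ) + K1' * ENNReal.ofReal (2 ^ σ)
    + ENNReal.ofReal (4 ^ τ) * K2 * ENNReal.ofReal (2 ^ (σ + τ - (d' : ℝ))), ?_, ?_⟩
  · refine ENNReal.add_ne_top.mpr ⟨ENNReal.add_ne_top.mpr
      ⟨ENNReal.mul_ne_top hK1fin ENNReal.ofReal_ne_top,
       ENNReal.mul_ne_top hK1'fin ENNReal.ofReal_ne_top⟩, ?_⟩
    exact ENNReal.mul_ne_top (ENNReal.mul_ne_top ENNReal.ofReal_ne_top hK2fin)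
      ENNReal.ofReal_ne_top
  intro x
  set s : ℝ := 1 + ‖x‖ with hs
  have hs1 : 1 ≤ s := by rw [hs]; simp [norm_nonneg]
  have hs0 : 0 < s := by linarith
  have hxs : ‖x‖ = s - 1 := by rw [hs]; ring
  have hsh : s / 2 ≤ 1 + ‖x‖ / 2 := by rw [hxs]; linarith
  set A : Set E := closedBall (0 : E) (‖x‖ / 2) with hA
  set A' : Set E := (fun y => x - y) ⁻¹' closedBall (0 : E) (‖x‖ / 2) with hA'
  have hAm : MeasurableSet A := measurableSet_closedBall
  have hA'm : MeasurableSet A' :=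
    measurableSet_closedBall.preimage (measurable_const.sub measurable_id)
  have hsplit : ∫⁻ y, W d' τ (x - y) * W d' σ y
      ≤ (∫⁻ y in A, W d' τ (x - y) * W d' σ y)
        + (∫⁻ y in A', W d' τ (x - y) * W d' σ y)
        + ∫⁻ y in (A ∪ A')ᶜ, W d' τ (x - y) * W d' σ y := by
    rw [← lintegral_add_compl (fun y => W d' τ (x - y) * W d' σ y) (hAm.union hA'm)]
    gcongr
    exact lintegral_union_le _ _ _
  -- bound on A
  have hIA : ∫⁻ y in A, W d' τ (x - y) * W d' σ y
      ≤ K1 * ENNReal.ofReal (2 ^ τ) * ENNReal.ofReal (s ^ ((d' : ℝ) - σ - τ)) := by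
    have hstep : ∀ y ∈ A, W d' τ (x - y) * W d' σ y
        ≤ ENNReal.ofReal ((s / 2) ^ (-τ)) * W d' σ y := by
      intro y hy
      rw [hA, mem_closedBall_iff_norm, sub_zero] at hy
      refine mul_le_mul' ?_ le_rfl
      apply ENNReal.ofReal_le_ofReal
      apply Real.rpow_le_rpow_of_nonpos (by positivity) ?_ (by linarith)
      have h := norm_sub_norm_le x y
      rw [show x - y = x - y from rfl] at h
      have : ‖x‖ - ‖y‖ ≤ ‖x - y‖ := norm_sub_norm_le x y
      linarith [hsh]
    calc ∫⁻ y in A, W d' τ (x - y) * W d' σ y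
        ≤ ∫⁻ y in A, ENNReal.ofReal ((s / 2) ^ (-τ)) * W d' σ y :=
          setLIntegral_mono' hAm hstep
      _ = ENNReal.ofReal ((s / 2) ^ (-τ)) * ∫⁻ y in A, W d' σ y :=
          lintegral_const_mul _ (W_meas σ)
      _ ≤ ENNReal.ofReal ((s / 2) ^ (-τ))
            * (K1 * ENNReal.ofReal ((1 + ‖x‖ / 2) ^ ((d' : ℝ) - σ))) := by
          gcongr
          exact hK1 _ (by positivity)
      _ ≤ K1 * ENNReal.ofReal (2 ^ τ) * ENNReal.ofReal (s ^ ((d' : ℝ) - σ - τ)) := by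
          have h1 : (1 + ‖x‖ / 2 : ℝ) ^ ((d' : ℝ) - σ) ≤ s ^ ((d' : ℝ) - σ) := by
            apply Real.rpow_le_rpow (by positivity) (by rw [hxs]; linarith) (by linarith)
          have h2 : ((s / 2 : ℝ)) ^ (-τ) = 2 ^ τ * s ^ (-τ) := by
            rw [Real.div_rpow hs0.le (by norm_num), Real.rpow_neg (by norm_num : (0:ℝ) ≤ 2),
              div_eq_mul_inv, inv_inv, mul_comm]
          have hre : (s / 2 : ℝ) ^ (-τ) * (1 + ‖x‖ / 2) ^ ((d' : ℝ) - σ)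
              ≤ 2 ^ τ * s ^ ((d' : ℝ) - σ - τ) := by
            calc (s / 2 : ℝ) ^ (-τ) * (1 + ‖x‖ / 2) ^ ((d' : ℝ) - σ)
                ≤ (s / 2 : ℝ) ^ (-τ) * s ^ ((d' : ℝ) - σ) := by
                  apply mul_le_mul_of_nonneg_left h1 (by positivity)
              _ = 2 ^ τ * s ^ ((d' : ℝ) - σ - τ) := by
                  rw [h2, mul_assoc, ← Real.rpow_add hs0]
                  ring_nf
          calc ENNReal.ofReal ((s / 2) ^ (-τ))
                * (K1 * ENNReal.ofReal ((1 + ‖x‖ / 2) ^ ((d' : ℝ) - σ)))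
              = K1 * ENNReal.ofReal ((s / 2) ^ (-τ) * (1 + ‖x‖ / 2) ^ ((d' : ℝ) - σ)) := by
                rw [ENNReal.ofReal_mul (by positivity)]; ring
            _ ≤ K1 * ENNReal.ofReal (2 ^ τ * s ^ ((d' : ℝ) - σ - τ)) := by
                gcongr
            _ = _ := by rw [ENNReal.ofReal_mul (by positivity), ← mul_assoc]
  -- bound on A'
  have hIA' : ∫⁻ y in A', W d' τ (x - y) * W d' σ y
      ≤ K1' * ENNReal.ofReal (2 ^ σ) * ENNReal.ofReal (s ^ ((d' : ℝ) - σ - τ)) := by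
    have hstep : ∀ y ∈ A', W d' τ (x - y) * W d' σ y
        ≤ ENNReal.ofReal ((s / 2) ^ (-σ)) * W d' τ (x - y) := by
      intro y hy
      rw [hA', mem_preimage, mem_closedBall_iff_norm, sub_zero] at hy
      rw [mul_comm]
      refine mul_le_mul' ?_ le_rfl
      apply ENNReal.ofReal_le_ofReal
      apply Real.rpow_le_rpow_of_nonpos (by positivity) ?_ (by linarith)
      have : ‖x‖ - ‖x - y‖ ≤ ‖x - (x - y)‖ := norm_sub_norm_le x (x - y)
      rw [sub_sub_cancel] at this
      linarith [hsh]
    calc ∫⁻ y in A', W d' τ (x - y) * W d' σ y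
        ≤ ∫⁻ y in A', ENNReal.ofReal ((s / 2) ^ (-σ)) * W d' τ (x - y) :=
          setLIntegral_mono' hA'm hstep
      _ = ENNReal.ofReal ((s / 2) ^ (-σ)) * ∫⁻ y in A', W d' τ (x - y) :=
          lintegral_const_mul _ ((W_meas τ).comp (measurable_const.sub measurable_id))
      _ = ENNReal.ofReal ((s / 2) ^ (-σ))
            * ∫⁻ z in closedBall (0 : E) (‖x‖ / 2), W d' τ z := by
          rw [lint_sub_left (W d' τ) x]
      _ ≤ ENNReal.ofReal ((s / 2) ^ (-σ))
            * (K1' * ENNReal.ofReal ((1 + ‖x‖ / 2) ^ ((d' : ℝ) - τ))) := by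
          gcongr
          exact hK1' _ (by positivity)
      _ ≤ K1' * ENNReal.ofReal (2 ^ σ) * ENNReal.ofReal (s ^ ((d' : ℝ) - σ - τ)) := by
          have h1 : (1 + ‖x‖ / 2 : ℝ) ^ ((d' : ℝ) - τ) ≤ s ^ ((d' : ℝ) - τ) := by
            apply Real.rpow_le_rpow (by positivity) (by rw [hxs]; linarith) (by linarith)
          have h2 : ((s / 2 : ℝ)) ^ (-σ) = 2 ^ σ * s ^ (-σ) := by
            rw [Real.div_rpow hs0.le (by norm_num), Real.rpow_neg (by norm_num : (0:ℝ) ≤ 2),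
              div_eq_mul_inv, inv_inv, mul_comm]
          have hre : (s / 2 : ℝ) ^ (-σ) * (1 + ‖x‖ / 2) ^ ((d' : ℝ) - τ)
              ≤ 2 ^ σ * s ^ ((d' : ℝ) - σ - τ) := by
            calc (s / 2 : ℝ) ^ (-σ) * (1 + ‖x‖ / 2) ^ ((d' : ℝ) - τ)
                ≤ (s / 2 : ℝ) ^ (-σ) * s ^ ((d' : ℝ) - τ) := by
                  apply mul_le_mul_of_nonneg_left h1 (by positivity)
              _ = 2 ^ σ * s ^ ((d' : ℝ) - σ - τ) := by
                  rw [h2, mul_assoc, ← Real.rpow_add hs0]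
                  ring_nf
          calc ENNReal.ofReal ((s / 2) ^ (-σ))
                * (K1' * ENNReal.ofReal ((1 + ‖x‖ / 2) ^ ((d' : ℝ) - τ)))
              = K1' * ENNReal.ofReal ((s / 2) ^ (-σ) * (1 + ‖x‖ / 2) ^ ((d' : ℝ) - τ)) := by
                rw [ENNReal.ofReal_mul (by positivity)]; ring
            _ ≤ K1' * ENNReal.ofReal (2 ^ σ * s ^ ((d' : ℝ) - σ - τ)) := by
                gcongr
            _ = _ := by rw [ENNReal.ofReal_mul (by positivity), ← mul_assoc]
  -- bound on B
  have hIB : ∫⁻ y in (A ∪ A')ᶜ, W d' τ (x - y) * W d' σ y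
      ≤ ENNReal.ofReal (4 ^ τ) * K2 * ENNReal.ofReal (2 ^ (σ + τ - (d' : ℝ)))
        * ENNReal.ofReal (s ^ ((d' : ℝ) - σ - τ)) := by
    have hstep : ∀ y ∈ (A ∪ A')ᶜ, W d' τ (x - y) * W d' σ y
        ≤ ENNReal.ofReal (4 ^ τ) * W d' (σ + τ) y := by
      intro y hy
      rw [mem_compl_iff, mem_union, not_or] at hy
      obtain ⟨hy1, hy2⟩ := hy
      rw [hA, mem_closedBall_iff_norm, sub_zero, not_le] at hy1
      rw [hA', mem_preimage, mem_closedBall_iff_norm, sub_zero, not_le] at hy2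
      have hkey : (1 + ‖y‖) / 4 ≤ 1 + ‖x - y‖ := by
        rcases le_or_gt (‖y‖ / 2) ‖x‖ with h | h
        · linarith
        · have : ‖y‖ - ‖x‖ ≤ ‖x - y‖ := by
            have := norm_sub_norm_le y x
            rwa [norm_sub_rev y x] at this
          linarith
      have hreal : (1 + ‖x - y‖) ^ (-τ) * (1 + ‖y‖) ^ (-σ)
          ≤ 4 ^ τ * (1 + ‖y‖) ^ (-(σ + τ)) := by
        have h1 : (1 + ‖x - y‖) ^ (-τ) ≤ ((1 + ‖y‖) / 4) ^ (-τ) :=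
          Real.rpow_le_rpow_of_nonpos (by positivity) hkey (by linarith)
        have h2 : ((1 + ‖y‖ : ℝ) / 4) ^ (-τ) = 4 ^ τ * (1 + ‖y‖) ^ (-τ) := by
          rw [Real.div_rpow (by positivity) (by norm_num),
            Real.rpow_neg (by norm_num : (0:ℝ) ≤ 4), div_eq_mul_inv, inv_inv, mul_comm]
        calc (1 + ‖x - y‖) ^ (-τ) * (1 + ‖y‖) ^ (-σ)
            ≤ ((1 + ‖y‖) / 4) ^ (-τ) * (1 + ‖y‖) ^ (-σ) :=
              mul_le_mul_of_nonneg_right h1 (by positivity)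
          _ = 4 ^ τ * (1 + ‖y‖) ^ (-(σ + τ)) := by
              rw [h2, mul_assoc, ← Real.rpow_add (by positivity : (0:ℝ) < 1 + ‖y‖)]
              ring_nf
      calc W d' τ (x - y) * W d' σ y
          = ENNReal.ofReal ((1 + ‖x - y‖) ^ (-τ) * (1 + ‖y‖) ^ (-σ)) := by
            rw [W, W, ← ENNReal.ofReal_mul (by positivity)]
        _ ≤ ENNReal.ofReal (4 ^ τ * (1 + ‖y‖) ^ (-(σ + τ))) :=
            ENNReal.ofReal_le_ofReal hreal
        _ = ENNReal.ofReal (4 ^ τ) * W d' (σ + τ) y := by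
            rw [W, ← ENNReal.ofReal_mul (by positivity)]
    have hsub : (A ∪ A')ᶜ ⊆ {y : E | ‖x‖ / 2 ≤ ‖y‖} := by
      intro y hy
      rw [mem_compl_iff, mem_union, not_or] at hy
      obtain ⟨hy1, _⟩ := hy
      rw [hA, mem_closedBall_iff_norm, sub_zero, not_le] at hy1
      exact le_of_lt hy1
    calc ∫⁻ y in (A ∪ A')ᶜ, W d' τ (x - y) * W d' σ y
        ≤ ∫⁻ y in (A ∪ A')ᶜ, ENNReal.ofReal (4 ^ τ) * W d' (σ + τ) y :=
          setLIntegral_mono' (hAm.union hA'm).compl hstep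
      _ = ENNReal.ofReal (4 ^ τ) * ∫⁻ y in (A ∪ A')ᶜ, W d' (σ + τ) y :=
          lintegral_const_mul _ (W_meas _)
      _ ≤ ENNReal.ofReal (4 ^ τ) * ∫⁻ y in {y : E | ‖x‖ / 2 ≤ ‖y‖}, W d' (σ + τ) y := by
          gcongr
      _ ≤ ENNReal.ofReal (4 ^ τ)
            * (K2 * ENNReal.ofReal ((1 + ‖x‖ / 2) ^ ((d' : ℝ) - (σ + τ)))) := by
          gcongr
          exact hK2 _ (by positivity)
      _ ≤ _ := by
          have h1 : (1 + ‖x‖ / 2 : ℝ) ^ ((d' : ℝ) - (σ + τ)) ≤ (s / 2) ^ ((d' : ℝ) - (σ + τ)) :=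
            Real.rpow_le_rpow_of_nonpos (by positivity) hsh (by linarith)
          have h2 : ((s / 2 : ℝ)) ^ ((d' : ℝ) - (σ + τ))
              = 2 ^ (σ + τ - (d' : ℝ)) * s ^ ((d' : ℝ) - σ - τ) := by
            rw [Real.div_rpow hs0.le (by norm_num),
              show ((d' : ℝ) - (σ + τ)) = -(σ + τ - (d' : ℝ)) by ring,
              Real.rpow_neg (by norm_num : (0:ℝ) ≤ 2), div_eq_mul_inv, inv_inv,
              mul_comm]
            congr 1
            · ring_nf
          calc ENNReal.ofReal (4 ^ τ)
                * (K2 * ENNReal.ofReal ((1 + ‖x‖ / 2) ^ ((d' : ℝ) - (σ + τ))))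
              ≤ ENNReal.ofReal (4 ^ τ)
                * (K2 * ENNReal.ofReal (2 ^ (σ + τ - (d' : ℝ)) * s ^ ((d' : ℝ) - σ - τ))) := by
                gcongr
                exact h1.trans_eq h2
            _ = _ := by rw [ENNReal.ofReal_mul (by positivity)]; ring
  calc ∫⁻ y, W d' τ (x - y) * W d' σ y
      ≤ _ := hsplit
    _ ≤ K1 * ENNReal.ofReal (2 ^ τ) * ENNReal.ofReal (s ^ ((d' : ℝ) - σ - τ))
        + K1' * ENNReal.ofReal (2 ^ σ) * ENNReal.ofReal (s ^ ((d' : ℝ) - σ - τ))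
        + ENNReal.ofReal (4 ^ τ) * K2 * ENNReal.ofReal (2 ^ (σ + τ - (d' : ℝ)))
          * ENNReal.ofReal (s ^ ((d' : ℝ) - σ - τ)) := by
        gcongr
    _ = _ := by ring

/-- the Japanese bracket weight appearing in convPowF -/
def gg (d' : ℕ) (ρ : ℝ) (x : EuclideanSpace ℝ (Fin d')) : ℝ≥0∞ :=
  ENNReal.ofReal ((1 + ‖x‖ ^ 2) ^ (-ρ / 2))

lemma sq_le (x : E) : 1 + ‖x‖ ^ 2 ≤ (1 + ‖x‖) ^ 2 := by nlinarith [norm_nonneg x]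
lemma le_sq (x : E) : (1 + ‖x‖) ^ 2 ≤ 2 * (1 + ‖x‖ ^ 2) := by nlinarith [sq_nonneg (‖x‖ - 1)]

lemma pow_two_rpow {t : ℝ} (ht : 0 < t) (ρ : ℝ) : (t ^ 2) ^ (-ρ / 2) = t ^ (-ρ) := by
  rw [← Real.rpow_natCast t 2, ← Real.rpow_mul ht.le]
  congr 1
  push_cast
  ring

lemma W_le_gg (ρ : ℝ) (hρ : 0 ≤ ρ) (x : E) : W d' ρ x ≤ gg d' ρ x := by
  apply ENNReal.ofReal_le_ofReal
  rw [← pow_two_rpow (show (0:ℝ) < 1 + ‖x‖ by positivity) ρ]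
  apply Real.rpow_le_rpow_of_nonpos (by positivity) (sq_le x) (by linarith)

lemma gg_le_W (ρ : ℝ) (hρ : 0 ≤ ρ) (x : E) :
    gg d' ρ x ≤ ENNReal.ofReal (2 ^ (ρ / 2)) * W d' ρ x := by
  rw [W, ← ENNReal.ofReal_mul (by positivity)]
  apply ENNReal.ofReal_le_ofReal
  have h2 : (1 + ‖x‖ ^ 2 : ℝ) ^ (-ρ / 2)
      = (2 : ℝ) ^ (ρ / 2) * (2 * (1 + ‖x‖ ^ 2)) ^ (-ρ / 2) := by
    rw [Real.mul_rpow (by norm_num) (by positivity), ← mul_assoc,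
      ← Real.rpow_add (by norm_num : (0:ℝ) < 2),
      show ρ / 2 + -ρ / 2 = 0 by ring, Real.rpow_zero, one_mul]
  rw [h2, ← pow_two_rpow (show (0:ℝ) < 1 + ‖x‖ by positivity) ρ]
  have h3 : ((2 : ℝ) * (1 + ‖x‖ ^ 2)) ^ (-ρ / 2) ≤ ((1 + ‖x‖) ^ 2 : ℝ) ^ (-ρ / 2) :=
    Real.rpow_le_rpow_of_nonpos (by positivity) (le_sq x) (by linarith)
  exact mul_le_mul_of_nonneg_left h3 (by positivity)

lemma half_gg_le_W (ρ : ℝ) (hρ : 0 ≤ ρ) (x : E) :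
    ENNReal.ofReal (2 ^ (-ρ / 2)) * gg d' ρ x ≤ W d' ρ x := by
  rw [gg, ← ENNReal.ofReal_mul (by positivity)]
  apply ENNReal.ofReal_le_ofReal
  have h2 : (2 : ℝ) ^ (-ρ / 2) * (1 + ‖x‖ ^ 2) ^ (-ρ / 2)
      = (2 * (1 + ‖x‖ ^ 2)) ^ (-ρ / 2) := by
    rw [Real.mul_rpow (by norm_num) (by positivity)]
  rw [h2, ← pow_two_rpow (show (0:ℝ) < 1 + ‖x‖ by positivity) ρ]
  exact Real.rpow_le_rpow_of_nonpos (by positivity) (le_sq x) (by linarith)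

end Stmt18Aux
end Stmt18AuxSection

open Stmt18Aux Metric Set in
/-- Two-sided bound c⟨x⟩^{(n−1)d′−nσ} ≤ f^{∗n}(x) ≤ C⟨x⟩^{(n−1)d′−nσ} for
f = ⟨x⟩^{−σ}, 0 < σ < d′, nσ > (n−1)d′. -/
theorem stmt18 (d' : ℕ) (hd' : 1 ≤ d') (σ : ℝ) (hσ0 : 0 < σ) (hσd : σ < d')
    (n : ℕ) (hn : 1 ≤ n) (hnσ : ((n:ℝ) - 1) * d' < n * σ) :
    ∃ c C : ℝ, 0 < c ∧ c ≤ C ∧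
      ∀ x : EuclideanSpace ℝ (Fin d'),
        ENNReal.ofReal (c * (1 + ‖x‖^2) ^ ((((n:ℝ) - 1) * d' - n * σ)/2))
            ≤ convPowF d' σ n x ∧
        convPowF d' σ n x
            ≤ ENNReal.ofReal (C * (1 + ‖x‖^2) ^ ((((n:ℝ) - 1) * d' - n * σ)/2)) := by
  set D : ℝ := (d' : ℝ) with hD
  set μ : ℕ → ℝ := fun k => (k : ℝ) * σ - ((k : ℝ) - 1) * D with hμ
  have hμn : 0 < μ n := by rw [hμ]; simp only; linarith
  have hμpos : ∀ k : ℕ, k ≤ n → 0 < μ k := by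
    intro k hk
    have hcast : (k : ℝ) ≤ (n : ℝ) := Nat.cast_le.mpr hk
    have hfact : μ k = μ n + ((n : ℝ) - (k : ℝ)) * (D - σ) := by rw [hμ]; ring
    nlinarith [mul_nonneg (sub_nonneg.mpr hcast) (sub_nonneg.mpr hσd.le)]
  have hμleσ : ∀ k : ℕ, 1 ≤ k → μ k ≤ σ := by
    intro k hk
    have hcast : (1 : ℝ) ≤ (k : ℝ) := by exact_mod_cast hk
    have hfact : μ k = σ - ((k : ℝ) - 1) * (D - σ) := by rw [hμ]; ring
    nlinarith [mul_nonneg (sub_nonneg.mpr hcast) (sub_nonneg.mpr hσd.le)]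
  have hμsucc : ∀ k : ℕ, μ (k + 1) = μ k + σ - D := by
    intro k; rw [hμ]; push_cast; ring
  -- main induction
  have key : ∀ k : ℕ, 1 ≤ k → k ≤ n →
      ∃ (c : ℝ) (K : ℝ≥0∞), 0 < c ∧ K ≠ ⊤ ∧ ∀ x : EuclideanSpace ℝ (Fin d'),
        ENNReal.ofReal c * gg d' (μ k) x ≤ convPowF d' σ k x ∧
        convPowF d' σ k x ≤ K * gg d' (μ k) x := by
    intro k hk
    induction k, hk using Nat.le_induction with
    | base =>
      intro _
      refine ⟨1, 1, one_pos, ENNReal.one_ne_top, fun x => ?_⟩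
      have h1 : μ 1 = σ := by rw [hμ]; push_cast; ring
      rw [h1]
      constructor
      · simp only [ENNReal.ofReal_one, one_mul, convPowF, gg]
        exact le_rfl
      · simp only [one_mul, convPowF, gg]
        exact le_rfl
    | succ k hk1 ih =>
      intro hk2
      obtain ⟨c, K, hc, hKfin, hIH⟩ := ih (by omega)
      have hμk0 : 0 < μ k := hμpos k (by omega)
      have hμk1 : 0 < μ (k + 1) := hμpos (k + 1) hk2
      have hμkσ : μ k ≤ σ := hμleσ k hk1
      have hμkD : μ k < D := by linarith
      have hστ : D < σ + μ k := by
        have := hμsucc k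
        linarith
      obtain ⟨K3, hK3fin, hK3⟩ := CU (d' := d') σ (μ k) hσ0 hσd hμk0 hμkD hστ
      obtain ⟨c3, hc3, hCL⟩ := CL (d' := d') σ (μ k) hσ0.le hμk0.le
      obtain ⟨m, rfl⟩ : ∃ m, k = m + 1 := ⟨k - 1, by omega⟩
      refine ⟨c * c3 * 2 ^ (-(μ (m + 1 + 1)) / 2),
        K * ENNReal.ofReal (2 ^ (μ (m + 1) / 2)) * ENNReal.ofReal (2 ^ (σ / 2)) * K3,
        by positivity,
        ENNReal.mul_ne_top (ENNReal.mul_ne_top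
          (ENNReal.mul_ne_top hKfin ENNReal.ofReal_ne_top) ENNReal.ofReal_ne_top) hK3fin,
        fun x => ?_⟩
      have hconv : convPowF d' σ (m + 1 + 1) x
          = ∫⁻ y, convPowF d' σ (m + 1) (x - y) * gg d' σ y := by
        simp only [convPowF, gg]
      have hexp : D - σ - μ (m + 1) = -(μ (m + 1 + 1)) := by
        have := hμsucc (m + 1); linarith
      constructor
      · -- lower bound
        rw [hconv]
        calc ENNReal.ofReal (c * c3 * 2 ^ (-(μ (m + 1 + 1)) / 2)) * gg d' (μ (m + 1 + 1)) x
            = ENNReal.ofReal (c * c3)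
              * (ENNReal.ofReal (2 ^ (-(μ (m + 1 + 1)) / 2)) * gg d' (μ (m + 1 + 1)) x) := by
              rw [← mul_assoc, ← ENNReal.ofReal_mul (by positivity)]
          _ ≤ ENNReal.ofReal (c * c3) * W d' (μ (m + 1 + 1)) x := by
              gcongr
              exact half_gg_le_W _ hμk1.le x
          _ = ENNReal.ofReal c
              * ENNReal.ofReal (c3 * (1 + ‖x‖) ^ (D - σ - μ (m + 1))) := by
              rw [hexp, W, ENNReal.ofReal_mul hc.le, ENNReal.ofReal_mul hc3.le, mul_assoc]
          _ ≤ ENNReal.ofReal c * ∫⁻ y, W d' (μ (m + 1)) (x - y) * W d' σ y := by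
              gcongr
              exact hCL x
          _ = ∫⁻ y, ENNReal.ofReal c * (W d' (μ (m + 1)) (x - y) * W d' σ y) := by
              rw [lintegral_const_mul]
              exact ((W_meas _).comp (measurable_const.sub measurable_id)).mul (W_meas _)
          _ ≤ ∫⁻ y, convPowF d' σ (m + 1) (x - y) * gg d' σ y := by
              apply lintegral_mono
              intro y
              calc ENNReal.ofReal c * (W d' (μ (m + 1)) (x - y) * W d' σ y)
                  = (ENNReal.ofReal c * W d' (μ (m + 1)) (x - y)) * W d' σ y := by ring
                _ ≤ (ENNReal.ofReal c * gg d' (μ (m + 1)) (x - y)) * gg d' σ y := by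
                    gcongr
                    · exact W_le_gg _ hμk0.le _
                    · exact W_le_gg _ hσ0.le _
                _ ≤ convPowF d' σ (m + 1) (x - y) * gg d' σ y := by
                    gcongr
                    exact (hIH (x - y)).1
      · -- upper bound
        rw [hconv]
        calc ∫⁻ y, convPowF d' σ (m + 1) (x - y) * gg d' σ y
            ≤ ∫⁻ y, (K * ENNReal.ofReal (2 ^ (μ (m + 1) / 2)) * ENNReal.ofReal (2 ^ (σ / 2)))
                * (W d' (μ (m + 1)) (x - y) * W d' σ y) := by
              apply lintegral_mono
              intro y
              calc convPowF d' σ (m + 1) (x - y) * gg d' σ y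
                  ≤ (K * gg d' (μ (m + 1)) (x - y)) * gg d' σ y := by
                    gcongr
                    exact (hIH (x - y)).2
                _ ≤ (K * (ENNReal.ofReal (2 ^ (μ (m + 1) / 2)) * W d' (μ (m + 1)) (x - y)))
                    * (ENNReal.ofReal (2 ^ (σ / 2)) * W d' σ y) := by
                    gcongr
                    · exact gg_le_W _ hμk0.le _
                    · exact gg_le_W _ hσ0.le _
                _ = _ := by ring
          _ = (K * ENNReal.ofReal (2 ^ (μ (m + 1) / 2)) * ENNReal.ofReal (2 ^ (σ / 2)))
                * ∫⁻ y, W d' (μ (m + 1)) (x - y) * W d' σ y := by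
              rw [lintegral_const_mul]
              exact ((W_meas _).comp (measurable_const.sub measurable_id)).mul (W_meas _)
          _ ≤ (K * ENNReal.ofReal (2 ^ (μ (m + 1) / 2)) * ENNReal.ofReal (2 ^ (σ / 2)))
                * (K3 * ENNReal.ofReal ((1 + ‖x‖) ^ (D - σ - μ (m + 1)))) := by
              gcongr
              exact hK3 x
          _ ≤ K * ENNReal.ofReal (2 ^ (μ (m + 1) / 2)) * ENNReal.ofReal (2 ^ (σ / 2)) * K3
                * gg d' (μ (m + 1 + 1)) x := by
              rw [mul_assoc (K * ENNReal.ofReal (2 ^ (μ (m + 1) / 2)) * ENNReal.ofReal (2 ^ (σ / 2))) K3]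
              gcongr
              rw [hexp]
              exact W_le_gg _ hμk1.le x
  obtain ⟨c, K, hc, hKfin, hbound⟩ := key n hn le_rfl
  refine ⟨c, max c K.toReal, hc, le_max_left _ _, fun x => ?_⟩
  have hgg : (1 + ‖x‖ ^ 2 : ℝ) ^ ((((n:ℝ) - 1) * d' - n * σ) / 2)
      = (1 + ‖x‖ ^ 2 : ℝ) ^ (-(μ n) / 2) := by
    congr 1
    rw [hμ]
    ring
  have hggnn : (0:ℝ) ≤ (1 + ‖x‖ ^ 2 : ℝ) ^ (-(μ n) / 2) := by positivity
  constructor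
  · rw [hgg, ENNReal.ofReal_mul hc.le]
    exact (hbound x).1
  · calc convPowF d' σ n x ≤ K * gg d' (μ n) x := (hbound x).2
      _ = ENNReal.ofReal K.toReal * ENNReal.ofReal ((1 + ‖x‖ ^ 2) ^ (-(μ n) / 2)) := by
          rw [ENNReal.ofReal_toReal hKfin, gg]
      _ ≤ ENNReal.ofReal (max c K.toReal * (1 + ‖x‖ ^ 2) ^ ((((n:ℝ) - 1) * d' - n * σ) / 2)) := by
          rw [hgg, ENNReal.ofReal_mul (le_max_of_le_right ENNReal.toReal_nonneg)]
          gcongr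
          exact le_max_right _ _

end
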